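/- The vector u = (0, 0, b/(3+17b), 0, 0, 2b/(3+17b), (2b+√(1−b²))/(6+34b), 0)ᵀ lies in the range of the partial transpose of ρ^[2](b) with respect to the third qubit, for b ∈ (0,1). -/

import Mathlib

noncomputable section

open scoped BigOperators ComplexOrder

abbrev Q3 := Fin 2 × Fin 2 × Fin 2

/-- lexicographic encoding of the 3-qubit basis -/
def enc (x : Q3) : Fin 8 :=
  ⟨4 * x.1.val + 2 * x.2.1.val + x.2.2.val, by
    have h1 := x.1.isLt; have h2 := x.2.1.isLt; have h3 := x.2.2.isLt; omega⟩

def Gam (b : ℝ) : ℝ := b / (1 + 7*b)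
def Lam (b : ℝ) : ℝ := (1 + 3*b) / (6 * (1 + 7*b))
def Del (b : ℝ) : ℝ := (1 + 5*b) / (6 * (1 + 7*b))
def zet (b : ℝ) : ℝ := (1 + b) / (2 * (1 + 7*b))
noncomputable def Ome (b : ℝ) : ℝ := (2*b + Real.sqrt (1 - b^2)) / (6 * (1 + 7*b))
def Theta (b : ℝ) : ℝ := (3 + 21*b) / (3 + 17*b)

/-- the matrix N of ρ^[2](b) = Θ·N, in the lexicographic basis -/
noncomputable def Nmat (b : ℝ) : Matrix (Fin 8) (Fin 8) ℝ :=
  !![Gam b, 0, 0, Gam b / 3, 0, Gam b / 3, Gam b / 3, 0;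
     0, Lam b, Lam b, 0, 0, 0, 0, Ome b;
     0, Lam b, Lam b, 0, 0, 0, 0, Ome b;
     Gam b / 3, 0, 0, Gam b, Gam b / 3, 0, 0, 0;
     0, 0, 0, Gam b / 3, Del b, 0, 0, Ome b;
     Gam b / 3, 0, 0, 0, 0, 2 * Gam b / 3, 2 * Gam b / 3, 0;
     Gam b / 3, 0, 0, 0, 0, 2 * Gam b / 3, 2 * Gam b / 3, 0;
     0, Ome b, Ome b, 0, Ome b, 0, 0, zet b]

/-- the state ρ^[2](b) as an operator on ℂ²⊗ℂ²⊗ℂ² -/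
noncomputable def rho2 (b : ℝ) : Matrix Q3 Q3 ℂ :=
  Matrix.of fun x y => ((Theta b * Nmat b (enc x) (enc y) : ℝ) : ℂ)

/-- partial transpose with respect to the first qubit -/
def ptA (ρ : Matrix Q3 Q3 ℂ) : Matrix Q3 Q3 ℂ :=
  Matrix.of fun x y => ρ (y.1, x.2) (x.1, y.2)

/-- partial transpose with respect to the third qubit -/
def ptC (ρ : Matrix Q3 Q3 ℂ) : Matrix Q3 Q3 ℂ :=
  Matrix.of fun x y => ρ (x.1, x.2.1, y.2.2) (y.1, y.2.1, x.2.2)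

/-- the vector u -/
noncomputable def uVec (b : ℝ) : Q3 → ℂ :=
  fun x =>
    (![0, 0, ((b / (3 + 17*b) : ℝ) : ℂ), 0, 0, ((2*b / (3 + 17*b) : ℝ) : ℂ),
       (((2*b + Real.sqrt (1 - b^2)) / (6 + 34*b) : ℝ) : ℂ), 0] : Fin 8 → ℂ) (enc x)

/-! The vector u is the column of the partially transposed state indexed by |101⟩: that column
has entries Θ·Γ/3, Θ·2Γ/3 and Θ·Ω in positions |010⟩, |101⟩ and |110⟩, and zeros elsewhere. -/

theorem Theta_mul_Gam {b : ℝ} (h₁ : 1 + 7 * b ≠ 0) (h₂ : 3 + 17 * b ≠ 0) :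
    Theta b * Gam b = 3 * b / (3 + 17 * b) := by
  rw [Theta, Gam, div_mul_div_comm, div_eq_div_iff (mul_ne_zero h₂ h₁) h₂]
  ring

theorem Theta_mul_Ome {b : ℝ} (h₁ : 1 + 7 * b ≠ 0) (h₂ : 3 + 17 * b ≠ 0) :
    Theta b * Ome b = (2 * b + Real.sqrt (1 - b ^ 2)) / (6 + 34 * b) := by
  have h₃ : (6 : ℝ) + 34 * b ≠ 0 := by contrapose! h₂; linarith
  rw [Theta, Ome, div_mul_div_comm,
    div_eq_div_iff (mul_ne_zero h₂ (mul_ne_zero (by norm_num) h₁)) h₃]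
  ring

theorem uVec_eq_col_ptC_rho2 {b : ℝ} (h₁ : 1 + 7 * b ≠ 0) (h₂ : 3 + 17 * b ≠ 0) :
    uVec b = (ptC (rho2 b)).col (1, 0, 1) := by
  funext x
  fin_cases x <;> simp only [uVec, ptC, rho2, Matrix.col_apply, Matrix.of_apply] <;>
    norm_num [enc, Nmat, -Complex.ofReal_mul, -Complex.ofReal_div]
  · linear_combination -Theta_mul_Gam h₁ h₂ / 3
  · linear_combination -2 * Theta_mul_Gam h₁ h₂ / 3
  · exact (Theta_mul_Ome h₁ h₂).symm

theorem uVec_in_range_of_ptC_rho2_general (b : ℝ) (hb0 : 0 < b) :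
    ∃ w : Q3 → ℂ, (ptC (rho2 b)).mulVec w = uVec b :=
  ⟨Pi.single (1, 0, 1) 1, by
    rw [Matrix.mulVec_single_one, uVec_eq_col_ptC_rho2 (by positivity) (by positivity)]⟩

theorem uVec_in_range_of_ptC_rho2 (b : ℝ) (hb0 : 0 < b) (hb1 : b < 1) :
    ∃ w : Q3 → ℂ, (ptC (rho2 b)).mulVec w = uVec b :=
  uVec_in_range_of_ptC_rho2_general b hb0
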